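/- Every convex 4-periodic billiard trajectory within an ellipse is a parallelogram, centrally symmetric about the center of the ellipse. Concretely: if P₁P₂P₃P₄ is a convex quadrilateral inscribed in the ellipse x²/a² + y²/b² = 1 satisfying the billiard reflection law at each vertex, then P₃ = −P₁ and P₄ = −P₂. -/

import Mathlib

open scoped RealInnerProductSpace

noncomputable section

abbrev Pt := EuclideanSpace ℝ (Fin 2)

def mk2 (x y : ℝ) : Pt := (EuclideanSpace.equiv (Fin 2) ℝ).symm ![x, y]

/-- A direction vector of the tangent line to the ellipse `x²/a² + y²/b² = 1`
at a point `P` of the ellipse. -/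
def tangentDir (a b : ℝ) (P : Pt) : Pt := mk2 (-(P 1) / b ^ 2) ((P 0) / a ^ 2)

/-- Billiard reflection law at the vertex `P i`: the incoming segment from `P (i-1)`
and the outgoing segment to `P (i+1)` make equal angles with opposite rays of the
tangent line at `P i` (the tangent is the exterior bisector of the angle). -/
def ReflectsAt (a b : ℝ) {n : ℕ} (P : ZMod n → Pt) (i : ZMod n) : Prop :=
  InnerProductGeometry.angle (P (i - 1) - P i) (tangentDir a b (P i)) =
    InnerProductGeometry.angle (P (i + 1) - P i) (-(tangentDir a b (P i)))

/- ### Auxiliary lemmas -/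

lemma inner_coords (u v : Pt) : ⟪u, v⟫ = u 0 * v 0 + u 1 * v 1 := by
  simp [PiLp.inner_apply, RCLike.inner_apply, Fin.sum_univ_two]; ring

lemma normsq_coords (u : Pt) : ‖u‖^2 = u 0^2 + u 1^2 := by
  rw [← real_inner_self_eq_norm_sq, inner_coords]; ring

lemma Pt_ext (p q : Pt) (h0 : p 0 = q 0) (h1 : p 1 = q 1) : p = q := by
  ext i; fin_cases i <;> assumption

lemma eq_of_sq_eq (x y : ℝ) (hx : 0 ≤ x) (hy : 0 ≤ y) (h : x^2 = y^2) : x = y := by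
  nlinarith [sq_nonneg (x - y), sq_nonneg (x + y)]

lemma sum_sq_pos (x y : ℝ) (h : ¬(x = 0 ∧ y = 0)) : 0 < x^2 + y^2 := by
  rcases not_and_or.mp h with h|h
  · have h1 : 0 < x^2 := lt_of_le_of_ne (sq_nonneg x) (Ne.symm (pow_ne_zero 2 h))
    nlinarith [sq_nonneg y]
  · have h1 : 0 < y^2 := lt_of_le_of_ne (sq_nonneg y) (Ne.symm (pow_ne_zero 2 h))
    nlinarith [sq_nonneg x]

lemma z_inj (u v u' v' : ℝ) (h : (u:ℂ) + v*Complex.I = (u':ℂ) + v'*Complex.I) :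
    u = u' ∧ v = v' := by
  have hre := congrArg Complex.re h
  have him := congrArg Complex.im h
  simp at hre him
  exact ⟨hre, him⟩

lemma keyStep (Au Av Nu Nv NT Bu Bv : ℝ)
    (hR : Au * Nv = -(Av * Nu))
    (hu : Au^2 + Bu^2 = Nu^2 * NT^2) (hv : Av^2 + Bv^2 = Nv^2 * NT^2) :
    (Bu * Nv)^2 = (Bv * Nu)^2 := by
  linear_combination Nv^2 * hu - Nu^2 * hv - (Au * Nv - Av * Nu) * hR

/-- From the (squared) reflection law at vertex `q` we obtain the
Joachimsthal-type relation `D(p,q) * ‖r - q‖ = D(q,r) * ‖p - q‖`. -/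
lemma vertexD (a b : ℝ) (ha : a ≠ 0) (hb : b ≠ 0) (p q r : Pt)
    (hp : p 0^2/a^2 + p 1^2/b^2 = 1) (hq : q 0^2/a^2 + q 1^2/b^2 = 1)
    (hr : r 0^2/a^2 + r 1^2/b^2 = 1)
    (hpq : p ≠ q) (hqr : q ≠ r)
    (hang : InnerProductGeometry.angle (p - q) (tangentDir a b q)
        = InnerProductGeometry.angle (r - q) (-tangentDir a b q)) :
    ((p 0 - q 0)^2/a^2 + (p 1 - q 1)^2/b^2) * ‖r - q‖
      = ((r 0 - q 0)^2/a^2 + (r 1 - q 1)^2/b^2) * ‖p - q‖ := by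
  set T := tangentDir a b q with hT
  have hT0 : T 0 = -(q 1) / b^2 := rfl
  have hT1 : T 1 = q 0 / a^2 := rfl
  have hTne : T ≠ 0 := by
    intro h
    have h0 : T 0 = 0 := by rw [h]; rfl
    have h1 : T 1 = 0 := by rw [h]; rfl
    rw [hT0] at h0; rw [hT1] at h1
    have hq1 : q 1 = 0 := by field_simp at h0; simpa using h0
    have hq0 : q 0 = 0 := by field_simp at h1; simpa using h1
    rw [hq0, hq1] at hq; norm_num at hq
  have hu : p - q ≠ 0 := sub_ne_zero.mpr hpq
  have hv : r - q ≠ 0 := sub_ne_zero.mpr (Ne.symm hqr)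
  have hNu : ‖p - q‖ ≠ 0 := norm_ne_zero_iff.mpr hu
  have hNv : ‖r - q‖ ≠ 0 := norm_ne_zero_iff.mpr hv
  have hNT : ‖T‖ ≠ 0 := norm_ne_zero_iff.mpr hTne
  have hcos := congrArg Real.cos hang
  rw [InnerProductGeometry.cos_angle, InnerProductGeometry.cos_angle,
    inner_neg_right, norm_neg] at hcos
  have hR : ⟪p - q, T⟫ * ‖r - q‖ = -(⟪r - q, T⟫ * ‖p - q‖) := by
    rw [div_eq_div_iff (by positivity) (by positivity)] at hcos
    apply mul_right_cancel₀ hNT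
    linear_combination hcos
  have hcu : ⟪p - q, T⟫ = (p 0 - q 0) * (-(q 1)/b^2) + (p 1 - q 1) * (q 0/a^2) := by
    rw [inner_coords]; simp [hT0, hT1]
  have hcv : ⟪r - q, T⟫ = (r 0 - q 0) * (-(q 1)/b^2) + (r 1 - q 1) * (q 0/a^2) := by
    rw [inner_coords]; simp [hT0, hT1]
  have hnu : ‖p - q‖^2 = (p 0 - q 0)^2 + (p 1 - q 1)^2 := by
    rw [normsq_coords]; simp
  have hnv : ‖r - q‖^2 = (r 0 - q 0)^2 + (r 1 - q 1)^2 := by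
    rw [normsq_coords]; simp
  have hnT : ‖T‖^2 = (q 1)^2/b^4 + (q 0)^2/a^4 := by
    rw [normsq_coords, hT0, hT1]; ring
  have hBu : (p 0 - q 0) * (q 0/a^2) + (p 1 - q 1) * (q 1/b^2)
      = -(((p 0 - q 0)^2/a^2 + (p 1 - q 1)^2/b^2))/2 := by
    linear_combination hp/2 - hq/2
  have hBv : (r 0 - q 0) * (q 0/a^2) + (r 1 - q 1) * (q 1/b^2)
      = -(((r 0 - q 0)^2/a^2 + (r 1 - q 1)^2/b^2))/2 := by
    linear_combination hr/2 - hq/2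
  have hI2u : ⟪p - q, T⟫^2 + ((p 0 - q 0) * (q 0/a^2) + (p 1 - q 1) * (q 1/b^2))^2
      = ‖p - q‖^2 * ‖T‖^2 := by
    rw [hcu, hnu, hnT]; ring
  have hI2v : ⟪r - q, T⟫^2 + ((r 0 - q 0) * (q 0/a^2) + (r 1 - q 1) * (q 1/b^2))^2
      = ‖r - q‖^2 * ‖T‖^2 := by
    rw [hcv, hnv, hnT]; ring
  rw [hBu] at hI2u; rw [hBv] at hI2v
  have hsq := keyStep _ _ _ _ _ _ _ hR hI2u hI2v
  apply eq_of_sq_eq _ _ (by positivity) (by positivity)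
  linear_combination 4 * hsq

lemma vieta (A₂ B₂ C₂ u v : ℂ) (hu : A₂*u^2 + B₂*u + C₂ = 0)
    (hv : A₂*v^2 + B₂*v + C₂ = 0) (huv : u ≠ v) : A₂*(u*v) = C₂ := by
  have h1 : (u - v) * (A₂*(u+v) + B₂) = 0 := by linear_combination hu - hv
  have h2 : A₂*(u+v) + B₂ = 0 := by
    rcases mul_eq_zero.mp h1 with h|h
    · exact absurd (sub_eq_zero.mp h) huv
    · exact h
  linear_combination u*h2 - hu

lemma chordF (k A B E q u0 v0 u1 v1 : ℝ)
    (hE : E = 1 - k^2*A/2) (hq : q = k^2*B/2)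
    (h0 : u0^2 + v0^2 = 1) (h1 : u1^2 + v1^2 = 1)
    (hD : (u0-u1)^2 + (v0-v1)^2 = k^2*(A - B*(u0*u1 - v0*v1))) :
    ((u0:ℂ)+v0*Complex.I)^2 + ((u1:ℂ)+v1*Complex.I)^2
      - 2*(E:ℂ)*(((u0:ℂ)+v0*Complex.I)*((u1:ℂ)+v1*Complex.I))
      - (q:ℂ)*((((u0:ℂ)+v0*Complex.I)*((u1:ℂ)+v1*Complex.I))^2+1) = 0 := by
  have h0c : ((u0:ℂ))^2+((v0:ℂ))^2 = 1 := by exact_mod_cast h0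
  have h1c : ((u1:ℂ))^2+((v1:ℂ))^2 = 1 := by exact_mod_cast h1
  have hDc : (((u0:ℂ))-u1)^2 + (((v0:ℂ))-v1)^2
      = (k:ℂ)^2*((A:ℂ) - (B:ℂ)*((u0:ℂ)*(u1:ℂ) - (v0:ℂ)*(v1:ℂ))) := by exact_mod_cast hD
  have hEc : (E:ℂ) = 1 - (k:ℂ)^2*(A:ℂ)/2 := by exact_mod_cast hE
  have hqc : (q:ℂ) = (k:ℂ)^2*(B:ℂ)/2 := by exact_mod_cast hq
  set z : ℂ := (u0:ℂ) + v0*Complex.I with hzdef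
  set w : ℂ := (u1:ℂ) + v1*Complex.I with hwdef
  linear_combination (norm := ring1)
    (-(z*w)) * hDc
    + (z*w + (q:ℂ)*(w*((u1:ℂ) - v1*Complex.I)) - w^2) * h0c
    + (z*w + (q:ℂ) - z^2) * h1c
    + (-2*(z*w)) * hEc
    + (-2*((u0:ℂ)*(u1:ℂ) - (v0:ℂ)*(v1:ℂ))*(z*w)) * hqc
    + ((z*w)*(((v0:ℂ)-(v1:ℂ))^2 - 2*(q:ℂ)*(v0:ℂ)*(v1:ℂ))
        - (z*w + (q:ℂ)*(w*((u1:ℂ) - v1*Complex.I)) - w^2)*(v0:ℂ)^2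
        - (z*w + (q:ℂ) - z^2)*(v1:ℂ)^2) * Complex.I_sq

lemma chordIdent (A B u0 v0 u1 v1 : ℝ) (h0 : u0^2+v0^2 = 1) (h1 : u1^2+v1^2 = 1) :
    (A+B)*(u0-u1)^2 + (A-B)*(v0-v1)^2
      = ((u0-u1)^2+(v0-v1)^2) * (A - B*(u0*u1 - v0*v1)) := by
  linear_combination (B*(u0*u1 - v0*v1 - 1 + 2*v1^2)) * h0
    + (B*(u0*u1 - v0*v1 + 1 - 2*u0^2)) * h1

set_option maxHeartbeats 4000000 in
/-- Every convex 4-periodic billiard trajectory within the ellipse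
`x²/a² + y²/b² = 1` is a parallelogram centrally symmetric about the center:
`P₃ = −P₁` and `P₄ = −P₂`. -/
theorem convex_four_periodic_is_parallelogram
    (a b : ℝ) (hb : 0 < b) (hab : b < a)
    (P : ZMod 4 → Pt)
    (honE : ∀ i : ZMod 4, (P i 0) ^ 2 / a ^ 2 + (P i 1) ^ 2 / b ^ 2 = 1)
    (hconvex : ∀ i : ZMod 4,
      P i ∉ convexHull ℝ ({P (i + 1), P (i + 2), P (i + 3)} : Set Pt))
    (hcross : (openSegment ℝ (P 0) (P 2) ∩ openSegment ℝ (P 1) (P 3)).Nonempty)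
    (hrefl : ∀ i : ZMod 4, ReflectsAt a b P i) :
    P 2 = -P 0 ∧ P 3 = -P 1 := by
  have ha : (0:ℝ) < a := hb.trans hab
  have ha' : a ≠ 0 := ne_of_gt ha
  have hb' : b ≠ 0 := ne_of_gt hb
  -- distinctness of the vertices
  have hne : ∀ i j : ZMod 4, j = i+1 ∨ j = i+2 ∨ j = i+3 → P i ≠ P j := by
    intro i j hj h
    apply hconvex i
    have hmem : P j ∈ ({P (i+1), P (i+2), P (i+3)} : Set Pt) := by
      rcases hj with h'|h'|h' <;> subst h' <;> simp
    rw [h]; exact subset_convexHull ℝ _ hmem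
  have h01 : P 0 ≠ P 1 := hne 0 1 (Or.inl (by decide))
  have h12 : P 1 ≠ P 2 := hne 1 2 (Or.inl (by decide))
  have h23 : P 2 ≠ P 3 := hne 2 3 (Or.inl (by decide))
  have h30 : P 3 ≠ P 0 := hne 3 0 (Or.inl (by decide))
  have h02 : P 0 ≠ P 2 := hne 0 2 (Or.inr (Or.inl (by decide)))
  have h13 : P 1 ≠ P 3 := hne 1 3 (Or.inr (Or.inl (by decide)))
  -- normalized coordinates
  set u0 := P 0 0 / a with hu0
  set u1 := P 1 0 / a with hu1
  set u2 := P 2 0 / a with hu2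
  set u3 := P 3 0 / a with hu3
  set v0 := P 0 1 / b with hv0
  set v1 := P 1 1 / b with hv1
  set v2 := P 2 1 / b with hv2
  set v3 := P 3 1 / b with hv3
  have hs0 : u0^2 + v0^2 = 1 := by rw [hu0, hv0, div_pow, div_pow]; exact honE 0
  have hs1 : u1^2 + v1^2 = 1 := by rw [hu1, hv1, div_pow, div_pow]; exact honE 1
  have hs2 : u2^2 + v2^2 = 1 := by rw [hu2, hv2, div_pow, div_pow]; exact honE 2
  have hs3 : u3^2 + v3^2 = 1 := by rw [hu3, hv3, div_pow, div_pow]; exact honE 3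
  have hX0 : P 0 0 = a * u0 := by rw [hu0]; field_simp
  have hX1 : P 1 0 = a * u1 := by rw [hu1]; field_simp
  have hX2 : P 2 0 = a * u2 := by rw [hu2]; field_simp
  have hX3 : P 3 0 = a * u3 := by rw [hu3]; field_simp
  have hY0 : P 0 1 = b * v0 := by rw [hv0]; field_simp
  have hY1 : P 1 1 = b * v1 := by rw [hv1]; field_simp
  have hY2 : P 2 1 = b * v2 := by rw [hv2]; field_simp
  have hY3 : P 3 1 = b * v3 := by rw [hv3]; field_simp
  -- chord lengths
  set L01 := ‖P 0 - P 1‖ with hL01d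
  set L12 := ‖P 1 - P 2‖ with hL12d
  set L23 := ‖P 2 - P 3‖ with hL23d
  set L30 := ‖P 3 - P 0‖ with hL30d
  have hL01pos : 0 < L01 := by rw [hL01d]; exact norm_pos_iff.mpr (sub_ne_zero.mpr h01)
  have hL12pos : 0 < L12 := by rw [hL12d]; exact norm_pos_iff.mpr (sub_ne_zero.mpr h12)
  have hL23pos : 0 < L23 := by rw [hL23d]; exact norm_pos_iff.mpr (sub_ne_zero.mpr h23)
  have hL30pos : 0 < L30 := by rw [hL30d]; exact norm_pos_iff.mpr (sub_ne_zero.mpr h30)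
  -- normalized squared chord "lengths"
  set D01 := (u0-u1)^2 + (v0-v1)^2 with hD01d
  set D12 := (u1-u2)^2 + (v1-v2)^2 with hD12d
  set D23 := (u2-u3)^2 + (v2-v3)^2 with hD23d
  set D30 := (u3-u0)^2 + (v3-v0)^2 with hD30d
  have coordNe : ∀ (i j : ZMod 4), P i ≠ P j →
      ¬(P i 0 / a = P j 0 / a ∧ P i 1 / b = P j 1 / b) := by
    intro i j hij ⟨hx, hy⟩
    apply hij
    apply Pt_ext
    · field_simp at hx; exact hx
    · field_simp at hy; exact hy
  have hD01pos : 0 < D01 := by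
    rw [hD01d]
    apply sum_sq_pos
    intro ⟨hx, hy⟩
    exact coordNe 0 1 h01 ⟨sub_eq_zero.mp hx, sub_eq_zero.mp hy⟩
  -- the four reflection relations
  have hvert1 := vertexD a b ha' hb' (P 0) (P 1) (P 2) (honE 0) (honE 1) (honE 2)
    h01 h12 (hrefl 1)
  have hvert2 := vertexD a b ha' hb' (P 1) (P 2) (P 3) (honE 1) (honE 2) (honE 3)
    h12 h23 (hrefl 2)
  have hvert3 := vertexD a b ha' hb' (P 2) (P 3) (P 0) (honE 2) (honE 3) (honE 0)
    h23 h30 (hrefl 3)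
  -- convert to normalized form
  have conv01 : (P 0 0 - P 1 0)^2/a^2 + (P 0 1 - P 1 1)^2/b^2 = D01 := by
    rw [hD01d, hX0, hX1, hY0, hY1]; field_simp
  have conv12 : (P 1 0 - P 2 0)^2/a^2 + (P 1 1 - P 2 1)^2/b^2 = D12 := by
    rw [hD12d, hX1, hX2, hY1, hY2]; field_simp
  have conv12' : (P 2 0 - P 1 0)^2/a^2 + (P 2 1 - P 1 1)^2/b^2 = D12 := by
    rw [hD12d, hX1, hX2, hY1, hY2]; field_simp; ring
  have conv23 : (P 2 0 - P 3 0)^2/a^2 + (P 2 1 - P 3 1)^2/b^2 = D23 := by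
    rw [hD23d, hX2, hX3, hY2, hY3]; field_simp
  have conv23' : (P 3 0 - P 2 0)^2/a^2 + (P 3 1 - P 2 1)^2/b^2 = D23 := by
    rw [hD23d, hX2, hX3, hY2, hY3]; field_simp; ring
  have conv30' : (P 0 0 - P 3 0)^2/a^2 + (P 0 1 - P 3 1)^2/b^2 = D30 := by
    rw [hD30d, hX0, hX3, hY0, hY3]; field_simp; ring
  have hLr12 : ‖P 2 - P 1‖ = L12 := by rw [hL12d, norm_sub_rev]
  have hLr23 : ‖P 3 - P 2‖ = L23 := by rw [hL23d, norm_sub_rev]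
  have hLr30 : ‖P 0 - P 3‖ = L30 := by rw [hL30d, norm_sub_rev]
  rw [conv01, conv12', hLr12, ← hL01d] at hvert1
  rw [conv12, conv23', hLr23, ← hL12d] at hvert2
  rw [conv23, conv30', hLr30, ← hL23d] at hvert3
  -- hvert1 : D01 * L12 = D12 * L01, etc.
  set k := D01 / L01 with hkd
  have hkpos : 0 < k := by rw [hkd]; exact div_pos hD01pos hL01pos
  have hk01 : D01 = k * L01 := by rw [hkd]; field_simp
  have hk12 : D12 = k * L12 := by
    rw [hkd, div_mul_eq_mul_div, eq_div_iff (ne_of_gt hL01pos)]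
    linear_combination -hvert1
  have hk23 : D23 = k * L23 := by
    apply mul_left_cancel₀ (ne_of_gt hL12pos)
    linear_combination L23 * hk12 - hvert2
  have hk30 : D30 = k * L30 := by
    apply mul_left_cancel₀ (ne_of_gt hL23pos)
    linear_combination L30 * hk23 - hvert3
  have hD12pos : 0 < D12 := by rw [hk12]; exact mul_pos hkpos hL12pos
  have hD23pos : 0 < D23 := by rw [hk23]; exact mul_pos hkpos hL23pos
  have hD30pos : 0 < D30 := by rw [hk30]; exact mul_pos hkpos hL30pos
  -- constants
  set A := (a^2+b^2)/2 with hA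
  set B := (a^2-b^2)/2 with hB
  set E := 1 - k^2*A/2 with hE
  set q := k^2*B/2 with hq
  have hb2a2 : b^2 < a^2 := by
    rw [pow_two, pow_two]; exact mul_self_lt_mul_self hb.le hab
  have hb2pos : (0:ℝ) < b^2 := by positivity
  have hBpos : 0 < B := by rw [hB]; linarith only [hb2a2]
  have hABlt : B < A := by rw [hA, hB]; linarith only [hb2pos]
  have hqpos : 0 < q := by rw [hq]; positivity
  -- chord relations D = k² ρ²
  have chordRel : ∀ (x0 y0 x1 y1 DD LL : ℝ), x0^2+y0^2 = 1 → x1^2+y1^2 = 1 →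
      DD = (x0-x1)^2 + (y0-y1)^2 → 0 < DD →
      LL^2 = (a*x0 - a*x1)^2 + (b*y0 - b*y1)^2 → DD = k * LL →
      DD = k^2*(A - B*(x0*x1 - y0*y1)) := by
    intro x0 y0 x1 y1 DD LL hx0 hx1 hDD hDDpos hLL hDk
    have hLsq : LL^2 = (A+B)*(x0-x1)^2 + (A-B)*(y0-y1)^2 := by
      rw [hLL, hA, hB]; ring
    have hLD : LL^2 = DD * (A - B*(x0*x1 - y0*y1)) := by
      rw [hLsq, hDD]; exact chordIdent A B x0 y0 x1 y1 hx0 hx1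
    apply mul_left_cancel₀ (ne_of_gt hDDpos)
    linear_combination (DD + k*LL)*hDk + k^2*hLD
  have hLsq01 : L01^2 = (a*u0 - a*u1)^2 + (b*v0 - b*v1)^2 := by
    rw [hL01d, normsq_coords]; simp only [PiLp.sub_apply]
    rw [hX0, hX1, hY0, hY1]
  have hLsq12 : L12^2 = (a*u1 - a*u2)^2 + (b*v1 - b*v2)^2 := by
    rw [hL12d, normsq_coords]; simp only [PiLp.sub_apply]
    rw [hX1, hX2, hY1, hY2]
  have hLsq23 : L23^2 = (a*u2 - a*u3)^2 + (b*v2 - b*v3)^2 := by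
    rw [hL23d, normsq_coords]; simp only [PiLp.sub_apply]
    rw [hX2, hX3, hY2, hY3]
  have hLsq30 : L30^2 = (a*u3 - a*u0)^2 + (b*v3 - b*v0)^2 := by
    rw [hL30d, normsq_coords]; simp only [PiLp.sub_apply]
    rw [hX3, hX0, hY3, hY0]
  have hr01 := chordRel u0 v0 u1 v1 D01 L01 hs0 hs1 hD01d hD01pos hLsq01 hk01
  have hr12 := chordRel u1 v1 u2 v2 D12 L12 hs1 hs2 hD12d hD12pos hLsq12 hk12
  have hr23 := chordRel u2 v2 u3 v3 D23 L23 hs2 hs3 hD23d hD23pos hLsq23 hk23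
  have hr30 := chordRel u3 v3 u0 v0 D30 L30 hs3 hs0 hD30d hD30pos hLsq30 hk30
  -- complex points
  set z0 : ℂ := (u0:ℂ) + v0*Complex.I with hz0d
  set z1 : ℂ := (u1:ℂ) + v1*Complex.I with hz1d
  set z2 : ℂ := (u2:ℂ) + v2*Complex.I with hz2d
  set z3 : ℂ := (u3:ℂ) + v3*Complex.I with hz3d
  have hF01 : z0^2 + z1^2 - 2*(E:ℂ)*(z0*z1) - (q:ℂ)*((z0*z1)^2+1) = 0 := by
    rw [hz0d, hz1d]
    exact chordF k A B E q u0 v0 u1 v1 hE hq hs0 hs1 (by rw [hD01d] at hr01; exact hr01)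
  have hF12 : z1^2 + z2^2 - 2*(E:ℂ)*(z1*z2) - (q:ℂ)*((z1*z2)^2+1) = 0 := by
    rw [hz1d, hz2d]
    exact chordF k A B E q u1 v1 u2 v2 hE hq hs1 hs2 (by rw [hD12d] at hr12; exact hr12)
  have hF23 : z2^2 + z3^2 - 2*(E:ℂ)*(z2*z3) - (q:ℂ)*((z2*z3)^2+1) = 0 := by
    rw [hz2d, hz3d]
    exact chordF k A B E q u2 v2 u3 v3 hE hq hs2 hs3 (by rw [hD23d] at hr23; exact hr23)
  have hF30 : z3^2 + z0^2 - 2*(E:ℂ)*(z3*z0) - (q:ℂ)*((z3*z0)^2+1) = 0 := by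
    rw [hz3d, hz0d]
    exact chordF k A B E q u3 v3 u0 v0 hE hq hs3 hs0 (by rw [hD30d] at hr30; exact hr30)
  -- unit relations
  have hs0c : ((u0:ℂ))^2 + ((v0:ℂ))^2 = 1 := by exact_mod_cast hs0
  have hs1c : ((u1:ℂ))^2 + ((v1:ℂ))^2 = 1 := by exact_mod_cast hs1
  have hs2c : ((u2:ℂ))^2 + ((v2:ℂ))^2 = 1 := by exact_mod_cast hs2
  have hs3c : ((u3:ℂ))^2 + ((v3:ℂ))^2 = 1 := by exact_mod_cast hs3
  have hunit0 : z0 * ((u0:ℂ) - v0*Complex.I) = 1 := by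
    rw [hz0d]; linear_combination hs0c + (-(v0:ℂ)^2) * Complex.I_sq
  have hunit1 : z1 * ((u1:ℂ) - v1*Complex.I) = 1 := by
    rw [hz1d]; linear_combination hs1c + (-(v1:ℂ)^2) * Complex.I_sq
  have hzne0 : z0 ≠ 0 := by
    intro h; rw [h, zero_mul] at hunit0; exact one_ne_zero hunit0.symm
  have hzne1 : z1 ≠ 0 := by
    intro h; rw [h, zero_mul] at hunit1; exact one_ne_zero hunit1.symm
  -- injectivity facts
  have hzinj : ∀ (i j : ZMod 4) (ui vi uj vj : ℝ), P i ≠ P j →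
      P i 0 = a * ui → P i 1 = b * vi → P j 0 = a * uj → P j 1 = b * vj →
      ((ui:ℂ) + vi*Complex.I) ≠ ((uj:ℂ) + vj*Complex.I) := by
    intro i j ui vi uj vj hij hxi hyi hxj hyj h
    obtain ⟨h1, h2⟩ := z_inj _ _ _ _ h
    exact hij (Pt_ext _ _ (by rw [hxi, hxj, h1]) (by rw [hyi, hyj, h2]))
  have hz02 : z0 ≠ z2 := by
    rw [hz0d, hz2d]; exact hzinj 0 2 u0 v0 u2 v2 h02 hX0 hY0 hX2 hY2
  have hz13 : z1 ≠ z3 := by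
    rw [hz1d, hz3d]; exact hzinj 1 3 u1 v1 u3 v3 h13 hX1 hY1 hX3 hY3
  -- Vieta at the four vertices
  have hV1 : (1 - (q:ℂ)*z1^2)*(z0*z2) = z1^2 - (q:ℂ) :=
    vieta _ (-2*(E:ℂ)*z1) _ z0 z2 (by linear_combination hF01)
      (by linear_combination hF12) hz02
  have hV3 : (1 - (q:ℂ)*z3^2)*(z2*z0) = z3^2 - (q:ℂ) :=
    vieta _ (-2*(E:ℂ)*z3) _ z2 z0 (by linear_combination hF23)
      (by linear_combination hF30) (Ne.symm hz02)
  have hV0 : (1 - (q:ℂ)*z0^2)*(z1*z3) = z0^2 - (q:ℂ) :=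
    vieta _ (-2*(E:ℂ)*z0) _ z1 z3 (by linear_combination hF01)
      (by linear_combination hF30) hz13
  have hV2 : (1 - (q:ℂ)*z2^2)*(z1*z3) = z2^2 - (q:ℂ) :=
    vieta _ (-2*(E:ℂ)*z2) _ z1 z3 (by linear_combination hF12)
      (by linear_combination hF23) hz13
  by_cases hq1 : q = 1
  · -- the exceptional case: leads to a contradiction with the crossing diagonals
    exfalso
    have hqc1 : (q:ℂ) = 1 := by exact_mod_cast hq1
    have hk2pos : 0 < k^2 := by positivity
    have hEneg : E < 0 := by
      rw [hq] at hq1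
      have hEe : E = -(k^2*(A-B)/2) := by rw [hE]; linear_combination -hq1
      rw [hEe]
      linarith only [mul_pos hk2pos (sub_pos.mpr hABlt)]
    have hEc0 : (E:ℂ) ≠ 0 := Complex.ofReal_ne_zero.mpr (ne_of_lt hEneg)
    rw [hqc1] at hF01 hV1 hV0
    -- z0² ≠ 1 and z1² ≠ 1
    have hzsq1 : z1^2 ≠ 1 := by
      intro h
      have h0 : (E:ℂ)*(z0*z1) = 0 := by
        linear_combination (-1/2:ℂ)*hF01 - ((z0^2-1)/2)*h
      rcases mul_eq_zero.mp h0 with h'|h'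
      · exact hEc0 h'
      · rcases mul_eq_zero.mp h' with h''|h''
        · exact hzne0 h''
        · exact hzne1 h''
    have hzsq0 : z0^2 ≠ 1 := by
      intro h
      have h0 : (E:ℂ)*(z0*z1) = 0 := by
        linear_combination (-1/2:ℂ)*hF01 - ((z1^2-1)/2)*h
      rcases mul_eq_zero.mp h0 with h'|h'
      · exact hEc0 h'
      · rcases mul_eq_zero.mp h' with h''|h''
        · exact hzne0 h''
        · exact hzne1 h''
    -- products of opposite vertices
    have hprod02 : z0*z2 = -1 := by
      have hfac : (1 - z1^2)*(z0*z2 + 1) = 0 := by linear_combination hV1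
      rcases mul_eq_zero.mp hfac with h'|h'
      · exact absurd (by linear_combination -h' : z1^2 = 1) hzsq1
      · exact eq_neg_of_add_eq_zero_left h'
    have hprod13 : z1*z3 = -1 := by
      have hfac : (1 - z0^2)*(z1*z3 + 1) = 0 := by linear_combination hV0
      rcases mul_eq_zero.mp hfac with h'|h'
      · exact absurd (by linear_combination -h' : z0^2 = 1) hzsq0
      · exact eq_neg_of_add_eq_zero_left h'
    -- imaginary parts product is E/2 < 0
    have hfa : z0^2 - 1 = z0*(2*(v0:ℂ)*Complex.I) := by
      rw [hz0d]; linear_combination hs0c + (-(v0:ℂ)^2)*Complex.I_sq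
    have hfb : z1^2 - 1 = z1*(2*(v1:ℂ)*Complex.I) := by
      rw [hz1d]; linear_combination hs1c + (-(v1:ℂ)^2)*Complex.I_sq
    have hstep : (z0^2-1)*(z1^2-1) + 2*(E:ℂ)*(z0*z1) = 0 := by
      linear_combination -hF01
    have hfac2 : (z0*z1) * ((2*(v0:ℂ)*Complex.I)*(2*(v1:ℂ)*Complex.I) + 2*(E:ℂ)) = 0 := by
      linear_combination hstep - (z1^2-1)*hfa - (z0*(2*(v0:ℂ)*Complex.I))*hfb
    have hEv : (2*(v0:ℂ)*Complex.I)*(2*(v1:ℂ)*Complex.I) + 2*(E:ℂ) = 0 := by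
      rcases mul_eq_zero.mp hfac2 with h'|h'
      · exact absurd h' (mul_ne_zero hzne0 hzne1)
      · exact h'
    have hEvr : ((2*E - 4*(v0*v1) : ℝ) : ℂ) = 0 := by
      push_cast
      linear_combination hEv - 4*(v0:ℂ)*(v1:ℂ)*Complex.I_sq
    have him : v0*v1 = E/2 := by
      have h2 : 2*E - 4*(v0*v1) = 0 := by exact_mod_cast hEvr
      linear_combination (-1/4) * h2
    -- equal second coordinates of opposite vertices
    have hz2eq : z2 = -(u0:ℂ) + v0*Complex.I := by
      apply mul_left_cancel₀ hzne0
      rw [hprod02]; linear_combination hunit0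
    have hz3eq : z3 = -(u1:ℂ) + v1*Complex.I := by
      apply mul_left_cancel₀ hzne1
      rw [hprod13]; linear_combination hunit1
    have hv20 : v2 = v0 := by
      have h := hz2eq; rw [hz2d] at h
      have h' : ((u2:ℂ)) + (v2:ℂ)*Complex.I = ((-u0:ℝ):ℂ) + (v0:ℂ)*Complex.I := by
        push_cast; linear_combination h
      exact (z_inj _ _ _ _ h').2
    have hv31 : v3 = v1 := by
      have h := hz3eq; rw [hz3d] at h
      have h' : ((u3:ℂ)) + (v3:ℂ)*Complex.I = ((-u1:ℝ):ℂ) + (v1:ℂ)*Complex.I := by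
        push_cast; linear_combination h
      exact (z_inj _ _ _ _ h').2
    -- the two diagonals are horizontal segments at different heights: contradiction
    obtain ⟨pt, hpt02, hpt13⟩ := hcross
    obtain ⟨s, t, hs, ht, hst, hsum⟩ := hpt02
    obtain ⟨s', t', hs', ht', hst', hsum'⟩ := hpt13
    have he1 : pt 1 = s * P 0 1 + t * P 2 1 := by rw [← hsum]; simp
    have he2 : pt 1 = s' * P 1 1 + t' * P 3 1 := by rw [← hsum']; simp
    have hP21 : P 2 1 = P 0 1 := by rw [hY2, hY0, hv20]
    have hP31 : P 3 1 = P 1 1 := by rw [hY3, hY1, hv31]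
    rw [hP21] at he1; rw [hP31] at he2
    have hyy : P 0 1 = P 1 1 := by
      have e1 : pt 1 = P 0 1 := by rw [he1]; linear_combination (P 0 1) * hst
      have e2 : pt 1 = P 1 1 := by rw [he2]; linear_combination (P 1 1) * hst'
      rw [← e1, e2]
    have hvv : v0 = v1 := by
      rw [hY0, hY1] at hyy
      exact mul_left_cancel₀ hb' hyy
    rw [hvv] at him
    have h4 : (0:ℝ) ≤ E/2 := by rw [← him]; exact mul_self_nonneg v1
    exact absurd h4 (not_le.mpr (div_neg_of_neg_of_pos hEneg two_pos))
  · -- main case : q ≠ 1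
    have hqc2 : ((q:ℂ)^2 - 1) ≠ 0 := by
      intro h
      have hr' : q^2 - 1 = 0 := by exact_mod_cast h
      have hfac : (q-1)*(q+1) = 0 := by linear_combination hr'
      rcases mul_eq_zero.mp hfac with h'|h'
      · exact hq1 (sub_eq_zero.mp h')
      · linarith only [hqpos, h']
    have hkey13 : ((q:ℂ)^2 - 1)*(z3^2 - z1^2) = 0 := by
      linear_combination (1 - (q:ℂ)*z1^2)*hV3 - (1 - (q:ℂ)*z3^2)*hV1
    have hkey02 : ((q:ℂ)^2 - 1)*(z2^2 - z0^2) = 0 := by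
      linear_combination (1 - (q:ℂ)*z0^2)*hV2 - (1 - (q:ℂ)*z2^2)*hV0
    have hsq13 : z3^2 = z1^2 := by
      rcases mul_eq_zero.mp hkey13 with h'|h'
      · exact absurd h' hqc2
      · linear_combination h'
    have hsq02 : z2^2 = z0^2 := by
      rcases mul_eq_zero.mp hkey02 with h'|h'
      · exact absurd h' hqc2
      · linear_combination h'
    have hz3n : z3 = -z1 := by
      have hfac : (z3 - z1)*(z3 + z1) = 0 := by linear_combination hsq13
      rcases mul_eq_zero.mp hfac with h'|h'
      · exact absurd (sub_eq_zero.mp h').symm hz13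
      · exact eq_neg_of_add_eq_zero_left h'
    have hz2n : z2 = -z0 := by
      have hfac : (z2 - z0)*(z2 + z0) = 0 := by linear_combination hsq02
      rcases mul_eq_zero.mp hfac with h'|h'
      · exact absurd (sub_eq_zero.mp h').symm hz02
      · exact eq_neg_of_add_eq_zero_left h'
    constructor
    · -- P 2 = -P 0
      have hh := hz2n
      rw [hz2d, hz0d] at hh
      have h' : ((u2:ℂ)) + (v2:ℂ)*Complex.I = ((-u0:ℝ):ℂ) + ((-v0:ℝ):ℂ)*Complex.I := by
        push_cast
        linear_combination hh
      obtain ⟨e1, e2⟩ := z_inj _ _ _ _ h'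
      apply Pt_ext
      · simp only [PiLp.neg_apply]; rw [hX2, hX0, e1]; ring
      · simp only [PiLp.neg_apply]; rw [hY2, hY0, e2]; ring
    · -- P 3 = -P 1
      have hh := hz3n
      rw [hz3d, hz1d] at hh
      have h' : ((u3:ℂ)) + (v3:ℂ)*Complex.I = ((-u1:ℝ):ℂ) + ((-v1:ℝ):ℂ)*Complex.I := by
        push_cast
        linear_combination hh
      obtain ⟨e1, e2⟩ := z_inj _ _ _ _ h'
      apply Pt_ext
      · simp only [PiLp.neg_apply]; rw [hX3, hX1, e1]; ring
      · simp only [PiLp.neg_apply]; rw [hY3, hY1, e2]; ring
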